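/- arXiv:2106.09111 — 2 statements merged into one kernel-verified Lean document; each statement's English description precedes it below -/
import Mathlib

section
/- For each $k$, the reduced bounds $\tilde\phi_k^U = \min(\phi_k^U, D^U - \sum_{i\ne k}\phi_i^L)$ and $\tilde\phi_k^L = \max(\phi_k^L, D^L - \sum_{i\ne k}\phi_i^U)$ are reachable: there exist feasible vectors $\phi$ (satisfying $\phi_i^L \le \phi_i \le \phi_i^U$ for all $i$ and $D^L \le \sum_i \phi_i \le D^U$) with $\phi_k = \tilde\phi_k^U$, and feasible vectors with $\phi_k = \tilde\phi_k^L$. -/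
lemma reach_aux (m : ℕ) (φL φU : Fin m → ℝ) (DL DU : ℝ)
    (hLU : ∀ i, φL i ≤ φU i) (hD : DL ≤ DU) (k : Fin m) (v : ℝ)
    (hvL : φL k ≤ v) (hvU : v ≤ φU k)
    (ha : v + ∑ i ∈ Finset.univ.erase k, φL i ≤ DU)
    (hb : DL ≤ v + ∑ i ∈ Finset.univ.erase k, φU i) :
    ∃ φ : Fin m → ℝ, (∀ i, φL i ≤ φ i ∧ φ i ≤ φU i) ∧
      DL ≤ ∑ i, φ i ∧ ∑ i, φ i ≤ DU ∧ φ k = v := by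
  classical
  set SL := ∑ i ∈ Finset.univ.erase k, φL i with hSL
  set SU := ∑ i ∈ Finset.univ.erase k, φU i with hSU
  have hSLU : SL ≤ SU := Finset.sum_le_sum (fun i _ => hLU i)
  set c := SU - SL with hc
  have hc0 : (0:ℝ) ≤ c := by linarith
  set T := max DL (v + SL) with hT
  have hT1 : DL ≤ T := le_max_left _ _
  have hT2 : T ≤ DU := max_le hD ha
  have hTa : v + SL ≤ T := le_max_right _ _
  have hTb : T ≤ v + SU := max_le hb (by linarith)
  set t := (T - (v + SL)) / c with ht
  clear_value SL SU c T t
  have ht0 : 0 ≤ t := by rw [ht]; exact div_nonneg (by linarith) hc0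
  have ht1 : t ≤ 1 := by
    rcases eq_or_lt_of_le hc0 with h | h
    · simp [ht, ← h]
    · rw [ht, div_le_one h]; linarith
  refine ⟨fun i => if i = k then v else φL i + t * (φU i - φL i), fun i => ?_, ?_⟩
  · by_cases hik : i = k
    · subst hik; simp [hvL, hvU]
    · simp only [if_neg hik]
      have hd : 0 ≤ φU i - φL i := by linarith [hLU i]
      constructor
      · nlinarith [mul_nonneg ht0 hd]
      · nlinarith [mul_le_mul_of_nonneg_right ht1 hd]
  · have hsum : ∑ i, (if i = k then v else φL i + t * (φU i - φL i))
        = v + SL + t * c := by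
      rw [← Finset.sum_erase_add _ _ (Finset.mem_univ k)]
      simp only [if_true, eq_self_iff_true]
      have : ∑ i ∈ Finset.univ.erase k, (if i = k then v else φL i + t * (φU i - φL i))
          = ∑ i ∈ Finset.univ.erase k, (φL i + t * (φU i - φL i)) := by
        apply Finset.sum_congr rfl
        intro i hi
        rw [if_neg (Finset.ne_of_mem_erase hi)]
      rw [this, Finset.sum_add_distrib, ← Finset.mul_sum, Finset.sum_sub_distrib]
      rw [← hSL, ← hSU, ← hc]
      ring
    have hTc : v + SL + t * c = T := by
      rcases eq_or_lt_of_le hc0 with h | h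
      · have : T = v + SL := by
          have : SU = SL := by linarith
          apply le_antisymm (by linarith) hTa
        rw [← h]; linarith
      · rw [ht, div_mul_cancel₀ _ (ne_of_gt h)]; ring
    rw [hsum, hTc]
    exact ⟨hT1, hT2, by simp⟩

theorem imprecise_shap_bounds_reachable (m : ℕ) (hm : 1 ≤ m)
    (φL φU : Fin m → ℝ) (DL DU : ℝ)
    (h0 : ∀ i, 0 ≤ φL i) (hLU : ∀ i, φL i ≤ φU i) (hD : DL ≤ DU)
    (hsumL : ∑ i, φL i ≤ DL) (hsumU : DU ≤ ∑ i, φU i) (k : Fin m) :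
    (∃ φ : Fin m → ℝ, (∀ i, φL i ≤ φ i ∧ φ i ≤ φU i) ∧
        DL ≤ ∑ i, φ i ∧ ∑ i, φ i ≤ DU ∧
        φ k = min (φU k) (DU - ∑ i ∈ Finset.univ.erase k, φL i)) ∧
    (∃ φ : Fin m → ℝ, (∀ i, φL i ≤ φ i ∧ φ i ≤ φU i) ∧
        DL ≤ ∑ i, φ i ∧ ∑ i, φ i ≤ DU ∧
        φ k = max (φL k) (DL - ∑ i ∈ Finset.univ.erase k, φU i)) := by
  classical
  have hsplitL : (∑ i ∈ Finset.univ.erase k, φL i) + φL k = ∑ i, φL i :=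
    Finset.sum_erase_add _ _ (Finset.mem_univ k)
  have hsplitU : (∑ i ∈ Finset.univ.erase k, φU i) + φU k = ∑ i, φU i :=
    Finset.sum_erase_add _ _ (Finset.mem_univ k)
  set SL := ∑ i ∈ Finset.univ.erase k, φL i with hSL
  set SU := ∑ i ∈ Finset.univ.erase k, φU i with hSU
  have hSLU : SL ≤ SU := Finset.sum_le_sum (fun i _ => hLU i)
  constructor
  · apply reach_aux m φL φU DL DU hLU hD k _ (le_min (hLU k) (by linarith))
      (min_le_left _ _)
    · have := min_le_right (φU k) (DU - SL); linarith
    · rcases le_total (φU k) (DU - SL) with h | h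
      · rw [min_eq_left h]; linarith
      · rw [min_eq_right h]; linarith
  · apply reach_aux m φL φU DL DU hLU hD k _ (le_max_left _ _)
      (max_le (hLU k) (by linarith))
    · rcases le_total (φL k) (DL - SU) with h | h
      · rw [max_eq_right h]; linarith
      · rw [max_eq_left h]; linarith
    · have := le_max_right (φL k) (DL - SU); linarith
end

section
/- Let $C \ge 2$ and let $\pi, \alpha$ range over nondecreasing vectors in $[0,1]^{C-1}$ with componentwise bounds $\pi_i \in [\pi_i^L, \pi_i^U]$ and $\alpha_i \in [\alpha_i^L, \alpha_i^U]$ (bounds themselves nondecreasing and consistent, so the feasible sets are nonempty). Then the maximum over feasible $\pi, \alpha$ of $\max_{1\le i\le C-1} |\pi_i - \alpha_i|$ equals $\max_{1\le k\le C-1} \max(\pi_k^U - \alpha_k^L,\ \alpha_k^U - \pi_k^L)$, where negative arguments are treated via the convention that the overall maximum is the max of those quantities attained with the corresponding sign condition ($\pi_k^U \ge \alpha_k^L$ or $\alpha_k^U \ge \pi_k^L$; at least one holds for each $k$). -/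
theorem ks_upper_bound_DU (C : ℕ) (hC : 2 ≤ C)
    (piL piU aL aU : Fin (C - 1) → ℝ)
    (hpiLm : Monotone piL) (hpiUm : Monotone piU)
    (haLm : Monotone aL) (haUm : Monotone aU)
    (hpi : ∀ i, piL i ≤ piU i) (ha : ∀ i, aL i ≤ aU i)
    (hpi0 : ∀ i, 0 ≤ piL i) (hpi1 : ∀ i, piU i ≤ 1)
    (ha0 : ∀ i, 0 ≤ aL i) (ha1 : ∀ i, aU i ≤ 1)
    (hne : (Finset.univ : Finset (Fin (C - 1))).Nonempty) :
    IsGreatest {y : ℝ | ∃ pi a : Fin (C - 1) → ℝ,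
        Monotone pi ∧ Monotone a ∧
        (∀ i, 0 ≤ pi i ∧ pi i ≤ 1) ∧ (∀ i, 0 ≤ a i ∧ a i ≤ 1) ∧
        (∀ i, piL i ≤ pi i ∧ pi i ≤ piU i) ∧
        (∀ i, aL i ≤ a i ∧ a i ≤ aU i) ∧
        y = Finset.univ.sup' hne (fun i => |pi i - a i|)}
      (Finset.univ.sup' hne (fun k => max (piU k - aL k) (aU k - piL k))) := by
  have key : ∀ (p a : Fin (C - 1) → ℝ),
      (∀ i, piL i ≤ p i ∧ p i ≤ piU i) → (∀ i, aL i ≤ a i ∧ a i ≤ aU i) →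
      Finset.univ.sup' hne (fun i => |p i - a i|) ≤
        Finset.univ.sup' hne (fun k => max (piU k - aL k) (aU k - piL k)) := by
    intro p a hpb hab
    apply Finset.sup'_le
    intro i _
    have h1 : |p i - a i| ≤ max (piU i - aL i) (aU i - piL i) := by
      obtain ⟨hp1, hp2⟩ := hpb i
      obtain ⟨ha1', ha2'⟩ := hab i
      rw [abs_sub_le_iff]
      constructor
      · exact le_trans (by linarith) (le_max_left (piU i - aL i) (aU i - piL i))
      · exact le_trans (by linarith) (le_max_right (piU i - aL i) (aU i - piL i))
    exact le_trans h1 (Finset.le_sup' (fun k => max (piU k - aL k) (aU k - piL k)) (Finset.mem_univ i))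
  constructor
  · -- membership
    obtain ⟨k, -, hkeq⟩ := Finset.exists_mem_eq_sup' hne
      (fun k => max (piU k - aL k) (aU k - piL k))
    by_cases hcase : aU k - piL k ≤ piU k - aL k
    · refine ⟨piU, aL, hpiUm, haLm,
        (fun i => ⟨le_trans (hpi0 i) (hpi i), hpi1 i⟩),
        (fun i => ⟨ha0 i, le_trans (ha i) (ha1 i)⟩),
        (fun i => ⟨hpi i, le_rfl⟩), (fun i => ⟨le_rfl, ha i⟩), ?_⟩
      refine le_antisymm ?_ (key piU aL (fun i => ⟨hpi i, le_rfl⟩) (fun i => ⟨le_rfl, ha i⟩))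
      rw [hkeq, max_eq_left hcase]
      calc piU k - aL k ≤ |piU k - aL k| := le_abs_self _
        _ ≤ _ := Finset.le_sup' (fun i => |piU i - aL i|) (Finset.mem_univ k)
    · push_neg at hcase
      refine ⟨piL, aU, hpiLm, haUm,
        (fun i => ⟨hpi0 i, le_trans (hpi i) (hpi1 i)⟩),
        (fun i => ⟨le_trans (ha0 i) (ha i), ha1 i⟩),
        (fun i => ⟨le_rfl, hpi i⟩), (fun i => ⟨ha i, le_rfl⟩), ?_⟩
      refine le_antisymm ?_ (key piL aU (fun i => ⟨le_rfl, hpi i⟩) (fun i => ⟨ha i, le_rfl⟩))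
      rw [hkeq, max_eq_right hcase.le]
      have h2 : aU k - piL k ≤ |piL k - aU k| := by
        rw [abs_sub_comm]; exact le_abs_self _
      calc aU k - piL k ≤ |piL k - aU k| := h2
        _ ≤ _ := Finset.le_sup' (fun i => |piL i - aU i|) (Finset.mem_univ k)
  · -- upper bound
    rintro y ⟨p, a, -, -, -, -, hpb, hab, rfl⟩
    exact key p a hpb hab
end
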